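/- In model M₂ (buyers have utility limits) with linear utilities, the equilibrium utility vector is unique: any two equilibria give every buyer the same utility. -/
import Mathlib


/-- Feasibility for the convex program `P3` capturing equilibria of market `M₂`
with linear utilities (the objective `∑ i, mᵢ log uᵢ` requires `uᵢ > 0`). -/
def P3Feasible (m n : ℕ) (U : Fin m → Fin n → ℝ) (d : Fin m → ℝ)
    (x : Fin m → Fin n → ℝ) (u : Fin m → ℝ) : Prop :=
  (∀ i j, 0 ≤ x i j) ∧ (∀ i, (∑ j, x i j * U i j) = u i) ∧
  (∀ i, 0 < u i) ∧ (∀ i, u i ≤ d i) ∧ (∀ j, (∑ i, x i j) ≤ 1)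

/-- Midpoint strict concavity of log. -/
lemma log_midpoint_lt {a b : ℝ} (ha : 0 < a) (hb : 0 < b) (hab : a ≠ b) :
    (Real.log a + Real.log b) / 2 < Real.log ((a + b) / 2) := by
  have h := strictConcaveOn_log_Ioi.2 (Set.mem_Ioi.2 ha) (Set.mem_Ioi.2 hb) hab
    (by norm_num : (0:ℝ) < 1/2) (by norm_num : (0:ℝ) < 1/2) (by norm_num)
  simp only [smul_eq_mul] at h
  rw [show (a + b) / 2 = 1/2 * a + 1/2 * b by ring]
  linarith

lemma log_midpoint_le {a b : ℝ} (ha : 0 < a) (hb : 0 < b) :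
    (Real.log a + Real.log b) / 2 ≤ Real.log ((a + b) / 2) := by
  rcases eq_or_ne a b with rfl | h
  · rw [show (a + a) / 2 = a by ring]
    rw [show (Real.log a + Real.log a)/2 = Real.log a by ring]
  · exact (log_midpoint_lt ha hb h).le

/-- In model `M₂` with linear utilities, any two optimal solutions of the convex
program `P3` (equivalently, any two equilibria) give every buyer the same utility. -/
theorem m2_utility_unique (m n : ℕ)
    (budget : Fin m → ℝ) (U : Fin m → Fin n → ℝ) (d : Fin m → ℝ)
    (hbudget : ∀ i, 0 < budget i)
    (x x' : Fin m → Fin n → ℝ) (u u' : Fin m → ℝ)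
    (hfeas : P3Feasible m n U d x u) (hfeas' : P3Feasible m n U d x' u')
    (hopt : ∀ y v, P3Feasible m n U d y v →
      (∑ i, budget i * Real.log (v i)) ≤ (∑ i, budget i * Real.log (u i)))
    (hopt' : ∀ y v, P3Feasible m n U d y v →
      (∑ i, budget i * Real.log (v i)) ≤ (∑ i, budget i * Real.log (u' i))) :
    u = u' := by
  by_contra hne
  obtain ⟨i0, hi0⟩ := Function.ne_iff.1 hne
  obtain ⟨hx1, hx2, hx3, hx4, hx5⟩ := hfeas
  obtain ⟨hx1', hx2', hx3', hx4', hx5'⟩ := hfeas'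
  set y : Fin m → Fin n → ℝ := fun i j => (x i j + x' i j) / 2 with hy
  set v : Fin m → ℝ := fun i => (u i + u' i) / 2 with hv
  have hfeasmid : P3Feasible m n U d y v := by
    refine ⟨fun i j => div_nonneg (add_nonneg (hx1 i j) (hx1' i j)) two_pos.le,
      fun i => ?_, fun i => div_pos (add_pos (hx3 i) (hx3' i)) two_pos,
      fun i => ?_, fun j => ?_⟩
    · simp only [hy, hv]
      rw [← hx2 i, ← hx2' i, ← Finset.sum_add_distrib, Finset.sum_div]
      apply Finset.sum_congr rfl; intro j _; ring
    · have := hx4 i; have := hx4' i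
      simp only [hv]; linarith
    · have := hx5 j; have := hx5' j
      simp only [hy]
      rw [← Finset.sum_div, Finset.sum_add_distrib]
      linarith
  have hS : (∑ i, budget i * Real.log (u i)) = (∑ i, budget i * Real.log (u' i)) :=
    le_antisymm (hopt' x u ⟨hx1, hx2, hx3, hx4, hx5⟩) (hopt x' u' ⟨hx1', hx2', hx3', hx4', hx5'⟩)
  have hlt : (∑ i, budget i * Real.log (u i)) < ∑ i, budget i * Real.log (v i) := by
    have key : ∀ i ∈ Finset.univ,
        budget i * ((Real.log (u i) + Real.log (u' i)) / 2) ≤ budget i * Real.log (v i) :=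
      fun i _ => mul_le_mul_of_nonneg_left (log_midpoint_le (hx3 i) (hx3' i)) (hbudget i).le
    have keystrict : budget i0 * ((Real.log (u i0) + Real.log (u' i0)) / 2)
        < budget i0 * Real.log (v i0) :=
      mul_lt_mul_of_pos_left (log_midpoint_lt (hx3 i0) (hx3' i0) hi0) (hbudget i0)
    have h1 : (∑ i, budget i * ((Real.log (u i) + Real.log (u' i)) / 2))
        < ∑ i, budget i * Real.log (v i) :=
      Finset.sum_lt_sum key ⟨i0, Finset.mem_univ i0, keystrict⟩
    have h2 : (∑ i, budget i * ((Real.log (u i) + Real.log (u' i)) / 2))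
        = ((∑ i, budget i * Real.log (u i)) + ∑ i, budget i * Real.log (u' i)) / 2 := by
      rw [← Finset.sum_add_distrib, Finset.sum_div]
      apply Finset.sum_congr rfl; intro i _; ring
    rw [h2, ← hS] at h1; linarith
  exact absurd (hopt y v hfeasmid) (not_le.2 hlt)
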